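/- arXiv:math-ph/0207026 — 3 statements merged into one kernel-verified Lean document; each statement's English description precedes it below -/
import Mathlib

section
/- Let Ω ⊆ ℂⁿ be a nonempty open set, w : Ω → ℝ continuous with w > 0, and f : Ω → ℝ measurable, with positive part f⁺ = max(f,0) and negative part f⁻ = max(−f,0). For a measurable g ≥ 0 let t_g(ψ) := ∫_Ω g |ψ|² w dλ. Suppose there exist constants 0 ≤ c₁ < 1 and c₂ ≥ 0 such that t_{f⁻}(ψ) ≤ c₁ t_{f⁺}(ψ) + c₂ ‖ψ‖² for all ψ ∈ Q(t_{f⁺}) := { ψ ∈ A²(Ω,w) : t_{f⁺}(ψ) < ∞ }. Then the form t_f(ψ) := t_{f⁺}(ψ) − t_{f⁻}(ψ) is well defined on Q(t_{f⁺}), is bounded below there by t_f(ψ) ≥ −c₂ ‖ψ‖², and is closed: Q(t_{f⁺}) is complete with respect to the norm ψ ↦ ( t_f(ψ) + (c₂+1) ‖ψ‖² )^{1/2}. -/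
open MeasureTheory ENNReal Filter

noncomputable section

instance (n : ℕ) : MeasurableSpace (EuclideanSpace ℂ (Fin n)) :=
  MeasurableSpace.comap WithLp.ofLp MeasurableSpace.pi
instance (n : ℕ) : BorelSpace (EuclideanSpace ℂ (Fin n)) := PiLp.borelSpace 2

/-- Lebesgue measure on `ℂⁿ ≅ ℝ^{2n}`, obtained from the real inner-product structure. -/
instance (n : ℕ) : MeasureSpace (EuclideanSpace ℂ (Fin n)) :=
  letI : InnerProductSpace ℝ (EuclideanSpace ℂ (Fin n)) := InnerProductSpace.rclikeToReal ℂ _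
  measureSpaceOfInnerProductSpace

/-- The quadratic form `t_g(ψ) = ∫_Ω g |ψ|² w dλ` (as an extended real). -/
def tForm (n : ℕ) (Ω : Set (EuclideanSpace ℂ (Fin n)))
    (w g : EuclideanSpace ℂ (Fin n) → ℝ) (ψ : EuclideanSpace ℂ (Fin n) → ℂ) : ℝ≥0∞ :=
  ∫⁻ x in Ω, ENNReal.ofReal (g x * ‖ψ x‖ ^ 2 * w x)

/-- The squared `A²(Ω,w)`-norm `‖ψ‖² = ∫_Ω |ψ|² w dλ` (as an extended real). -/
def l2NormSq (n : ℕ) (Ω : Set (EuclideanSpace ℂ (Fin n)))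
    (w : EuclideanSpace ℂ (Fin n) → ℝ) (ψ : EuclideanSpace ℂ (Fin n) → ℂ) : ℝ≥0∞ :=
  ∫⁻ x in Ω, ENNReal.ofReal (‖ψ x‖ ^ 2 * w x)

/-- Membership in the form domain `Q(t_{f⁺})`: holomorphic, square-integrable, and
`t_{f⁺}(ψ) < ∞`, where `f⁺ = max (f, 0)`. -/
def MemQplus (n : ℕ) (Ω : Set (EuclideanSpace ℂ (Fin n)))
    (w f : EuclideanSpace ℂ (Fin n) → ℝ) (ψ : EuclideanSpace ℂ (Fin n) → ℂ) : Prop :=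
  DifferentiableOn ℂ ψ Ω ∧ l2NormSq n Ω w ψ < ⊤ ∧
    tForm n Ω w (fun x => max (f x) 0) ψ < ⊤

/-- The norm `ψ ↦ (t_f(ψ) + (c₂+1)‖ψ‖²)^{1/2}` associated with the semibounded form
`t_f = t_{f⁺} − t_{f⁻}`. -/
def tfNorm (n : ℕ) (Ω : Set (EuclideanSpace ℂ (Fin n)))
    (w f : EuclideanSpace ℂ (Fin n) → ℝ) (c₂ : ℝ) (ψ : EuclideanSpace ℂ (Fin n) → ℂ) : ℝ :=
  Real.sqrt ((tForm n Ω w (fun x => max (f x) 0) ψ).toReal -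
    (tForm n Ω w (fun x => max (-f x) 0) ψ).toReal + (c₂ + 1) * (l2NormSq n Ω w ψ).toReal)

/-!
By the form bound, `t_f(ψ) + (c₂ + 1)‖ψ‖²` lies between `(1 - c₁)(t_{f⁺}(ψ) + ‖ψ‖²)` and
`(c₂ + 1)(t_{f⁺}(ψ) + ‖ψ‖²)`, so closedness amounts to completeness of `Q(t_{f⁺})` for
`t_{f⁺}(ψ) + ‖ψ‖² = ∫_Ω |ψ|² (f⁺ + 1) w`. This is a weighted Bergman norm whose weight dominates
the continuous positive `w`. By the sub-mean value property of `|ψ|²`, point evaluations are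
bounded on compacts, so a Cauchy sequence converges locally uniformly to a holomorphic `φ`, and
Fatou's lemma shows that it converges to `φ` in norm.
-/

open Metric Set

section UniformLimits

variable {α β : Type*} [UniformSpace β] [CompleteSpace β] [Nonempty β]
  {ι : Type*} {p : Filter ι} [p.NeBot] {F : ι → α → β} {s : Set α}

theorem UniformCauchySeqOn.tendstoUniformlyOn_limUnder (hF : UniformCauchySeqOn F p s) :
    TendstoUniformlyOn F (fun x => limUnder p (F · x)) p s :=
  hF.tendstoUniformlyOn_of_tendsto fun _ hx =>
    let ⟨_, ha⟩ := CompleteSpace.complete (hF.cauchy_map hx)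
    tendsto_nhds_limUnder ⟨_, ha⟩

theorem tendstoLocallyUniformlyOn_limUnder_of_uniformCauchySeqOn [TopologicalSpace α]
    [LocallyCompactSpace α]
    (hs : IsOpen s) (hF : ∀ K ⊆ s, IsCompact K → UniformCauchySeqOn F p K) :
    TendstoLocallyUniformlyOn F (fun x => limUnder p (F · x)) p s :=
  (tendstoLocallyUniformlyOn_iff_forall_isCompact hs).2 fun K hKs hK =>
    (hF K hKs hK).tendstoUniformlyOn_limUnder

end UniformLimits

section Holomorphic

variable {E G : Type*} [NormedAddCommGroup E] [NormedSpace ℂ E]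
  [NormedAddCommGroup G] [NormedSpace ℂ G]

/-- Cauchy's estimate, from the Schwarz lemma: `h` maps the ball into `closedBall (h x) (2 * M)`. -/
theorem norm_fderiv_le_of_forall_mem_ball_norm_le {h : E → G} {x : E} {r M : ℝ} (hr : 0 < r)
    (hd : DifferentiableOn ℂ h (ball x r)) (hM : ∀ z ∈ ball x r, ‖h z‖ ≤ M) :
    ‖fderiv ℂ h x‖ ≤ 2 * M / r := by
  refine Complex.norm_fderiv_le_div_of_mapsTo_ball hd (fun z hz => ?_) hr
  rw [mem_closedBall, dist_eq_norm]
  linarith [norm_sub_le (h z) (h x), hM z hz, hM x (mem_ball_self hr)]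

theorem differentiableOn_of_tendstoLocallyUniformlyOn [ProperSpace E] [CompleteSpace G]
    {U : Set E} (hU : IsOpen U) {F : ℕ → E → G} {f : E → G}
    (hF : ∀ n, DifferentiableOn ℂ (F n) U) (hf : TendstoLocallyUniformlyOn F f atTop U) :
    DifferentiableOn ℂ f U := by
  intro x hx
  obtain ⟨ε, hε, hεU⟩ := Metric.isOpen_iff.1 hU x hx
  set r := ε / 3 with hr_def
  have hr : 0 < r := by positivity
  have hsub : closedBall x (2 * r) ⊆ U :=
    (closedBall_subset_ball (by linarith [hr_def])).trans hεU
  have hunif : TendstoUniformlyOn F f atTop (closedBall x (2 * r)) :=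
    (tendstoLocallyUniformlyOn_iff_forall_isCompact hU).1 hf _ hsub (isCompact_closedBall _ _)
  have hmem : ∀ z ∈ ball x r, ball z r ⊆ closedBall x (2 * r) := fun z hz y hy => by
    rw [mem_closedBall]; linarith [dist_triangle y z x, mem_ball.1 hz, mem_ball.1 hy]
  have hU_of_mem : ∀ z ∈ ball x r, U ∈ nhds z := fun z hz =>
    hU.mem_nhds (hsub (hmem z hz (mem_ball_self hr)))
  have hderiv : UniformCauchySeqOn (fun n => fderiv ℂ (F n)) atTop (ball x r) := by
    rw [Metric.uniformCauchySeqOn_iff]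
    intro η hη
    obtain ⟨N, hN⟩ := Metric.uniformCauchySeqOn_iff.1 hunif.uniformCauchySeqOn (η * r / 3)
      (by positivity)
    refine ⟨N, fun k hk l hl z hz => ?_⟩
    have hbound := norm_fderiv_le_of_forall_mem_ball_norm_le (h := F k - F l) hr
      (((hF k).sub (hF l)).mono ((hmem z hz).trans hsub))
      (fun y hy => (dist_eq_norm (F k y) (F l y) ▸ hN k hk l hl y (hmem z hz hy)).le)
    rw [fderiv_sub ((hF k).differentiableAt (hU_of_mem z hz))
      ((hF l).differentiableAt (hU_of_mem z hz))] at hbound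
    rw [dist_eq_norm]
    calc _ ≤ 2 * (η * r / 3) / r := hbound
      _ < η := by field_simp; linarith
  have hlim := hasFDerivAt_of_tendstoUniformlyOn isOpen_ball hderiv.tendstoUniformlyOn_limUnder
    (fun n z hz => ((hF n).differentiableAt (hU_of_mem z hz)).hasFDerivAt)
    (fun z hz => hf.tendsto_at (mem_of_mem_nhds (hU_of_mem z hz))) (mem_ball_self hr)
  exact hlim.differentiableAt.differentiableWithinAt

end Holomorphic

section SubMeanValue

variable {G : Type*} [NormedAddCommGroup G] [NormedSpace ℂ G] [CompleteSpace G]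

theorem enorm_mul_two_pi_le_lintegral_circle {g : ℂ → G} (hg : DiffContOnCl ℂ g (ball 0 1)) :
    ‖g 0‖ₑ * ENNReal.ofReal (2 * Real.pi) ≤
      ∫⁻ θ in Ioc 0 (2 * Real.pi), ‖g (circleMap 0 1 θ)‖ₑ := by
  have hmean : Real.circleAverage g 0 1 = g 0 := DiffContOnCl.circleAverage (by simpa using hg)
  have hsmul : (2 * Real.pi) • g 0 = ∫ θ in Ioc 0 (2 * Real.pi), g (circleMap 0 1 θ) := by
    rw [← hmean, Real.circleAverage_def, smul_inv_smul₀ Real.two_pi_pos.ne',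
      intervalIntegral.integral_of_le Real.two_pi_pos.le]
  calc ‖g 0‖ₑ * ENNReal.ofReal (2 * Real.pi) = ‖(2 * Real.pi) • g 0‖ₑ := by
        rw [enorm_smul, Real.enorm_of_nonneg Real.two_pi_pos.le, mul_comm]
    _ ≤ _ := hsmul ▸ enorm_integral_le_lintegral_enorm _

variable {E : Type*} [NormedAddCommGroup E] [MeasurableSpace E] [BorelSpace E] {μ : Measure E}

theorem setLIntegral_ball_zero_comp_add_left [μ.IsAddLeftInvariant] (F : E → ℝ≥0∞) (x : E)
    (r : ℝ) : ∫⁻ y in ball 0 r, F (x + y) ∂μ = ∫⁻ z in ball x r, F z ∂μ := by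
  have hpre : (x + ·) ⁻¹' ball x r = ball 0 r := by
    ext y; simp [dist_eq_norm]
  conv_lhs => rw [← hpre]
  exact (measurePreserving_add_left μ x).setLIntegral_comp_preimage_emb
    (Homeomorph.addLeft x).measurableEmbedding _ _

variable [NormedSpace ℂ E]

theorem setLIntegral_ball_zero_comp_smul {c : ℂ} (hc : ‖c‖ = 1)
    (hrot : MeasurePreserving (c • · : E → E) μ μ) (F : E → ℝ≥0∞) (r : ℝ) :
    ∫⁻ y in ball 0 r, F (c • y) ∂μ = ∫⁻ y in ball 0 r, F y ∂μ := by
  have hc0 : c ≠ 0 := by rintro rfl; simp at hc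
  have hpre : (c • · : E → E) ⁻¹' ball 0 r = ball 0 r := by
    ext y; simp [norm_smul, hc]
  conv_lhs => rw [← hpre]
  exact hrot.setLIntegral_comp_preimage_emb (Homeomorph.smulOfNeZero c hc0).measurableEmbedding _ _

/-- Average the mean value inequality on the discs `ζ ↦ x + ζ • y` over `y ∈ ball 0 r`; each
rotation `y ↦ e^{iθ} • y` preserves `μ` and the ball. -/
theorem enorm_mul_measure_ball_le_setLIntegral [ProperSpace E] [SFinite μ] [μ.IsAddLeftInvariant]
    (hrot : ∀ c : ℂ, ‖c‖ = 1 → MeasurePreserving (c • · : E → E) μ μ) {h : E → G} {x : E}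
    {r : ℝ} (hd : DifferentiableOn ℂ h (ball x r)) :
    ‖h x‖ₑ * μ (ball 0 r) ≤ ∫⁻ z in ball x r, ‖h z‖ₑ ∂μ := by
  set c := ENNReal.ofReal (2 * Real.pi)
  set m : ℝ × E → E := fun p => x + circleMap 0 1 p.1 • p.2
  have hm : Continuous m := by unfold m; fun_prop
  have hmem : ∀ y ∈ ball (0 : E) r, ∀ ζ : ℂ, ‖ζ‖ ≤ 1 → x + ζ • y ∈ ball x r := fun y hy ζ hζ => by
    rw [mem_ball_zero_iff] at hy
    rw [mem_ball, dist_eq_norm, add_sub_cancel_left, norm_smul]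
    nlinarith [norm_nonneg ζ, norm_nonneg y]
  have hslice : ∀ y ∈ ball (0 : E) r, ‖h x‖ₑ * c ≤
      ∫⁻ θ in Ioc 0 (2 * Real.pi), ‖h (m (θ, y))‖ₑ := fun y hy => by
    have hg : DiffContOnCl ℂ (fun ζ : ℂ => h (x + ζ • y)) (ball 0 1) := by
      refine DifferentiableOn.diffContOnCl ?_
      rw [closure_ball _ one_ne_zero]
      exact hd.comp (by fun_prop) fun ζ hζ => hmem y hy ζ (by simpa using hζ)
    simpa only [zero_smul, add_zero] using enorm_mul_two_pi_le_lintegral_circle hg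
  have hmeas : AEMeasurable (Function.uncurry fun θ y => ‖h (m (θ, y))‖ₑ)
      ((volume.restrict (Ioc 0 (2 * Real.pi))).prod (μ.restrict (ball 0 r))) := by
    rw [Measure.prod_restrict]
    refine ContinuousOn.aemeasurable ?_ (measurableSet_Ioc.prod measurableSet_ball)
    refine continuous_enorm.comp_continuousOn (hd.continuousOn.comp hm.continuousOn ?_)
    rintro ⟨θ, y⟩ ⟨-, hy⟩
    exact hmem y hy _ (by simp)
  have hrotate : ∀ θ : ℝ, ∫⁻ y in ball 0 r, ‖h (m (θ, y))‖ₑ ∂μ = ∫⁻ z in ball x r, ‖h z‖ₑ ∂μ :=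
    fun θ => by
      have hθ : ‖circleMap 0 1 θ‖ = 1 := by simp
      rw [setLIntegral_ball_zero_comp_smul hθ (hrot _ hθ) (fun y => ‖h (x + y)‖ₑ),
        setLIntegral_ball_zero_comp_add_left (fun z => ‖h z‖ₑ)]
  have hc0 : c ≠ 0 := by simp [c, Real.pi_pos]
  refine (ENNReal.mul_le_mul_iff_left hc0 ENNReal.ofReal_ne_top).1 ?_
  calc ‖h x‖ₑ * μ (ball 0 r) * c = ∫⁻ _ in ball 0 r, ‖h x‖ₑ * c ∂μ := by
        rw [setLIntegral_const]; ring
    _ ≤ ∫⁻ y in ball 0 r, (∫⁻ θ in Ioc 0 (2 * Real.pi), ‖h (m (θ, y))‖ₑ) ∂μ :=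
        setLIntegral_mono' measurableSet_ball hslice
    _ = ∫⁻ θ in Ioc 0 (2 * Real.pi), (∫⁻ y in ball 0 r, ‖h (m (θ, y))‖ₑ ∂μ) :=
        (lintegral_lintegral_swap hmeas).symm
    _ = (∫⁻ z in ball x r, ‖h z‖ₑ ∂μ) * c := by
        simp_rw [hrotate, setLIntegral_const, Real.volume_Ioc, sub_zero, c]

end SubMeanValue

section WeightedBergman

variable {n : ℕ} {Ω : Set (EuclideanSpace ℂ (Fin n))}

local notation "𝔼" => EuclideanSpace ℂ (Fin n)

instance : (volume : Measure 𝔼).IsAddHaarMeasure := by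
  let _ : InnerProductSpace ℝ 𝔼 := InnerProductSpace.rclikeToReal ℂ _
  infer_instance

theorem EuclideanSpace.volume_preserving_smul_of_norm_eq_one {c : ℂ} (hc : ‖c‖ = 1) :
    MeasurePreserving (c • · : 𝔼 → 𝔼) volume volume := by
  let _ : InnerProductSpace ℝ 𝔼 := InnerProductSpace.rclikeToReal ℂ _
  have hc0 : c ≠ 0 := by rintro rfl; simp at hc
  let e : 𝔼 ≃ₗᵢ[ℝ] 𝔼 :=
    { toLinearEquiv := (LinearEquiv.smulOfNeZero ℂ 𝔼 c hc0).restrictScalars ℝ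
      norm_map' := fun y => by simp [norm_smul, hc] }
  exact e.measurePreserving

/-- Bergman's estimate: the sub-mean value property of `ψ ^ 2` on balls of a fixed radius `R`
around `K`, on which `w` is bounded below. -/
theorem exists_enorm_sq_le_mul_l2NormSq (hΩ : IsOpen Ω) {w : 𝔼 → ℝ}
    (hw : ContinuousOn w Ω) (hwpos : ∀ x ∈ Ω, 0 < w x) {K : Set 𝔼} (hK : IsCompact K)
    (hKΩ : K ⊆ Ω) :
    ∃ C : ℝ≥0∞, C ≠ ⊤ ∧ ∀ ψ : 𝔼 → ℂ, DifferentiableOn ℂ ψ Ω → ∀ x ∈ K,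
      ‖ψ x‖ₑ ^ 2 ≤ C * l2NormSq n Ω w ψ := by
  obtain ⟨R, hR, hRΩ⟩ := hK.exists_cthickening_subset_open hΩ hKΩ
  obtain ⟨δ, hδ, hδw⟩ := hK.cthickening.exists_forall_le' (hw.mono hRΩ)
    fun x hx => hwpos x (hRΩ hx)
  have hB : volume (ball (0 : 𝔼) R) ≠ 0 := (measure_ball_pos volume 0 hR).ne'
  refine ⟨(ENNReal.ofReal δ * volume (ball (0 : 𝔼) R))⁻¹,
    ENNReal.inv_ne_top.2 (mul_ne_zero (by simpa using hδ) hB), fun ψ hψ x hx => ?_⟩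
  have hball : ball x R ⊆ cthickening R K :=
    ball_subset_closedBall.trans (closedBall_subset_cthickening hx R)
  have hweight : ∀ z ∈ ball x R, ENNReal.ofReal δ * ‖ψ z ^ 2‖ₑ ≤
      ENNReal.ofReal (‖ψ z‖ ^ 2 * w z) := fun z hz => by
    rw [← ofReal_norm, ← ENNReal.ofReal_mul hδ.le, norm_pow]
    exact ENNReal.ofReal_le_ofReal
      (by rw [mul_comm]; exact mul_le_mul_of_nonneg_left (hδw z (hball hz)) (by positivity))
  have hsubmean := enorm_mul_measure_ball_le_setLIntegral
    (fun _ hc => EuclideanSpace.volume_preserving_smul_of_norm_eq_one hc)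
    ((hψ.pow 2).mono (hball.trans hRΩ))
  simp only [Pi.pow_apply, enorm_pow] at hsubmean
  rw [ENNReal.mul_inv (Or.inr measure_ball_lt_top.ne) (Or.inl ENNReal.ofReal_ne_top), mul_assoc,
    ← ENNReal.mul_le_iff_le_inv (by simpa using hδ) ENNReal.ofReal_ne_top,
    ← ENNReal.mul_le_iff_le_inv hB measure_ball_lt_top.ne]
  calc volume (ball (0 : 𝔼) R) * (ENNReal.ofReal δ * ‖ψ x‖ₑ ^ 2)
      = ENNReal.ofReal δ * (‖ψ x‖ₑ ^ 2 * volume (ball (0 : 𝔼) R)) := by ring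
    _ ≤ ENNReal.ofReal δ * ∫⁻ z in ball x R, ‖ψ z ^ 2‖ₑ := by
        simp only [enorm_pow]; gcongr
    _ = ∫⁻ z in ball x R, ENNReal.ofReal δ * ‖ψ z ^ 2‖ₑ :=
        (lintegral_const_mul' _ _ (by simp)).symm
    _ ≤ ∫⁻ z in ball x R, ENNReal.ofReal (‖ψ z‖ ^ 2 * w z) :=
        setLIntegral_mono' measurableSet_ball hweight
    _ ≤ l2NormSq n Ω w ψ := lintegral_mono_set (hball.trans hRΩ)

theorem l2NormSq_mono_weight (hΩm : MeasurableSet Ω) {W₁ W₂ : 𝔼 → ℝ}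
    (hW : ∀ x ∈ Ω, W₁ x ≤ W₂ x) (ψ : 𝔼 → ℂ) : l2NormSq n Ω W₁ ψ ≤ l2NormSq n Ω W₂ ψ :=
  setLIntegral_mono' hΩm fun x hx =>
    ENNReal.ofReal_le_ofReal (mul_le_mul_of_nonneg_left (hW x hx) (by positivity))

theorem tForm_add_l2NormSq (hΩm : MeasurableSet Ω) {w g : 𝔼 → ℝ} (hw0 : ∀ x ∈ Ω, 0 ≤ w x)
    (hg0 : ∀ x ∈ Ω, 0 ≤ g x) (hw : AEMeasurable w (volume.restrict Ω))
    (hg : AEMeasurable g (volume.restrict Ω)) {ψ : 𝔼 → ℂ}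
    (hψ : AEMeasurable ψ (volume.restrict Ω)) :
    tForm n Ω w g ψ + l2NormSq n Ω w ψ = l2NormSq n Ω (fun x => (g x + 1) * w x) ψ := by
  have hm : AEMeasurable (fun x => ENNReal.ofReal (g x * ‖ψ x‖ ^ 2 * w x)) (volume.restrict Ω) := by
    fun_prop
  rw [tForm, l2NormSq, l2NormSq, ← lintegral_add_left' hm]
  refine setLIntegral_congr_fun hΩm fun x hx => ?_
  have := hw0 x hx
  have := hg0 x hx
  rw [← ENNReal.ofReal_add (by positivity) (by positivity)]
  ring_nf

theorem l2NormSq_sub_le (hΩm : MeasurableSet Ω) {W : 𝔼 → ℝ} (hW0 : ∀ x ∈ Ω, 0 ≤ W x)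
    (hW : AEMeasurable W (volume.restrict Ω)) {a b : 𝔼 → ℂ}
    (ha : AEMeasurable a (volume.restrict Ω)) :
    l2NormSq n Ω W (fun x => a x - b x) ≤ 2 * l2NormSq n Ω W a + 2 * l2NormSq n Ω W b := by
  have hm : AEMeasurable (fun x => 2 * ENNReal.ofReal (‖a x‖ ^ 2 * W x)) (volume.restrict Ω) := by
    fun_prop
  rw [l2NormSq, l2NormSq, l2NormSq, ← lintegral_const_mul' _ _ (by simp),
    ← lintegral_const_mul' _ _ (by simp), ← lintegral_add_left' hm]
  refine setLIntegral_mono' hΩm fun x hx => ?_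
  have hsq : ‖a x - b x‖ ^ 2 ≤ 2 * ‖a x‖ ^ 2 + 2 * ‖b x‖ ^ 2 := by
    nlinarith [norm_sub_le (a x) (b x), norm_nonneg (a x - b x), sq_nonneg (‖a x‖ - ‖b x‖)]
  have := hW0 x hx
  rw [← ENNReal.ofReal_ofNat 2, ← ENNReal.ofReal_mul zero_le_two, ← ENNReal.ofReal_mul zero_le_two,
    ← ENNReal.ofReal_add (by positivity) (by positivity)]
  exact ENNReal.ofReal_le_ofReal (by nlinarith)

theorem l2NormSq_le_liminf (hΩm : MeasurableSet Ω) {W : 𝔼 → ℝ}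
    (hW : AEMeasurable W (volume.restrict Ω)) {χ : ℕ → 𝔼 → ℂ} {g : 𝔼 → ℂ}
    (hχ : ∀ l, AEMeasurable (χ l) (volume.restrict Ω))
    (hlim : ∀ x ∈ Ω, Tendsto (χ · x) atTop (nhds (g x))) :
    l2NormSq n Ω W g ≤ liminf (fun l => l2NormSq n Ω W (χ l)) atTop := by
  refine le_of_eq_of_le (setLIntegral_congr_fun hΩm fun x hx => ?_)
    (lintegral_liminf_le' fun l => (((hχ l).norm.pow_const 2).mul hW).ennreal_ofReal)
  exact (((ENNReal.continuous_ofReal.tendsto _).comp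
    (((hlim x hx).norm.pow 2).mul_const _)).liminf_eq).symm

theorem uniformCauchySeqOn_of_tendsto_l2NormSq (hΩ : IsOpen Ω) {w : 𝔼 → ℝ}
    (hw : ContinuousOn w Ω) (hwpos : ∀ x ∈ Ω, 0 < w x) {ψ : ℕ → 𝔼 → ℂ}
    (hψ : ∀ l, DifferentiableOn ℂ (ψ l) Ω)
    (hcauchy : Tendsto (fun p : ℕ × ℕ => l2NormSq n Ω w (fun x => ψ p.1 x - ψ p.2 x))
      (atTop ×ˢ atTop) (nhds 0))
    {K : Set 𝔼} (hK : IsCompact K) (hKΩ : K ⊆ Ω) : UniformCauchySeqOn ψ atTop K := by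
  obtain ⟨C, hC, hCψ⟩ := exists_enorm_sq_le_mul_l2NormSq hΩ hw hwpos hK hKΩ
  intro u hu
  obtain ⟨η, hη, hηu⟩ := Metric.mem_uniformity_dist.1 hu
  have hsmall : Tendsto (fun p : ℕ × ℕ => C * l2NormSq n Ω w (fun x => ψ p.1 x - ψ p.2 x))
      (atTop ×ˢ atTop) (nhds 0) := by
    simpa using ENNReal.Tendsto.const_mul hcauchy (Or.inr hC)
  filter_upwards [hsmall.eventually (gt_mem_nhds (by positivity : 0 < ENNReal.ofReal η ^ 2))]
    with p hp x hx
  refine hηu ?_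
  have hlt := ((hCψ _ ((hψ p.1).sub (hψ p.2)) x hx).trans_lt hp)
  rw [ENNReal.pow_lt_pow_left_iff two_ne_zero, ← ofReal_norm, ENNReal.ofReal_lt_ofReal_iff hη]
    at hlt
  rwa [dist_eq_norm]

/-- Completeness of the weighted Bergman space for a measurable weight `V ≥ w`: Bergman's estimate
for `w` makes the sequence locally uniformly Cauchy, and Fatou's lemma identifies its holomorphic
limit as the limit in norm. -/
theorem exists_tendsto_l2NormSq_sub_of_cauchy (hΩ : IsOpen Ω) {w V : 𝔼 → ℝ}
    (hw : ContinuousOn w Ω) (hwpos : ∀ x ∈ Ω, 0 < w x) (hV : AEMeasurable V (volume.restrict Ω))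
    (hwV : ∀ x ∈ Ω, w x ≤ V x) {ψ : ℕ → 𝔼 → ℂ} (hψ : ∀ l, DifferentiableOn ℂ (ψ l) Ω)
    (hfin : ∀ l, l2NormSq n Ω V (ψ l) < ⊤)
    (hcauchy : Tendsto (fun p : ℕ × ℕ => l2NormSq n Ω V (fun x => ψ p.1 x - ψ p.2 x))
      (atTop ×ˢ atTop) (nhds 0)) :
    ∃ φ, DifferentiableOn ℂ φ Ω ∧ l2NormSq n Ω V φ < ⊤ ∧
      Tendsto (fun l => l2NormSq n Ω V (fun x => ψ l x - φ x)) atTop (nhds 0) := by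
  have hΩm := hΩ.measurableSet
  have hψm : ∀ l, AEMeasurable (ψ l) (volume.restrict Ω) := fun l =>
    (hψ l).continuousOn.aemeasurable hΩm
  have hUC : ∀ K ⊆ Ω, IsCompact K → UniformCauchySeqOn ψ atTop K := fun K hKΩ hK =>
    uniformCauchySeqOn_of_tendsto_l2NormSq hΩ hw hwpos hψ (tendsto_of_tendsto_of_tendsto_of_le_of_le
      tendsto_const_nhds hcauchy (fun _ => bot_le)
      fun _ => l2NormSq_mono_weight hΩm hwV _) hK hKΩ
  have hloc := tendstoLocallyUniformlyOn_limUnder_of_uniformCauchySeqOn hΩ hUC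
  set φ := fun x => limUnder atTop (ψ · x)
  have hlim : Tendsto (fun k => l2NormSq n Ω V (fun x => ψ k x - φ x)) atTop (nhds 0) := by
    refine ENNReal.tendsto_nhds_zero.2 fun ε hε => ?_
    filter_upwards [(ENNReal.tendsto_nhds_zero.1 hcauchy ε hε).curry] with k hk
    refine (l2NormSq_le_liminf hΩm hV (fun l => (hψm k).sub (hψm l))
      fun x hx => tendsto_const_nhds.sub (hloc.tendsto_at hx)).trans ?_
    exact liminf_le_of_frequently_le' hk.frequently
  obtain ⟨k, hk⟩ := (hlim.eventually (gt_mem_nhds one_pos)).exists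
  have hV0 : ∀ x ∈ Ω, 0 ≤ V x := fun x hx => (hwpos x hx).le.trans (hwV x hx)
  refine ⟨φ, differentiableOn_of_tendstoLocallyUniformlyOn hΩ hψ hloc, ?_, hlim⟩
  calc l2NormSq n Ω V φ = l2NormSq n Ω V (fun x => ψ k x - (ψ k x - φ x)) := by simp
    _ ≤ 2 * l2NormSq n Ω V (ψ k) + 2 * l2NormSq n Ω V (fun x => ψ k x - φ x) :=
        l2NormSq_sub_le hΩm hV0 hV (hψm k)
    _ < ⊤ := ENNReal.add_lt_top.2 ⟨ENNReal.mul_lt_top (by simp) (hfin k),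
        ENNReal.mul_lt_top (by simp) (hk.trans ENNReal.one_lt_top)⟩

end WeightedBergman

/-- `∫_Ω |ψ|² (f⁺ + 1) w = t_{f⁺}(ψ) + ‖ψ‖²`, so the form norm of `Q(t_{f⁺})` is a weighted
Bergman norm. -/
def formWeight {E : Type*} (w f : E → ℝ) (x : E) : ℝ := (max (f x) 0 + 1) * w x

theorem self_le_formWeight {E : Type*} {w f : E → ℝ} {x : E} (hw : 0 ≤ w x) :
    w x ≤ formWeight w f x := by
  unfold formWeight
  nlinarith [le_max_right (f x) 0]

section FormDomain

variable {n : ℕ} {Ω : Set (EuclideanSpace ℂ (Fin n))} {w f : EuclideanSpace ℂ (Fin n) → ℝ}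

theorem aemeasurable_formWeight (hΩm : MeasurableSet Ω) (hw : ContinuousOn w Ω)
    (hf : Measurable f) : AEMeasurable (formWeight w f) (volume.restrict Ω) :=
  ((hf.max measurable_const).add_const 1).aemeasurable.mul (hw.aemeasurable hΩm)

theorem tForm_add_l2NormSq_eq_formWeight (hΩ : IsOpen Ω) (hw : ContinuousOn w Ω)
    (hw0 : ∀ x ∈ Ω, 0 ≤ w x) (hf : Measurable f) {ψ : EuclideanSpace ℂ (Fin n) → ℂ}
    (hψ : DifferentiableOn ℂ ψ Ω) :
    tForm n Ω w (fun x => max (f x) 0) ψ + l2NormSq n Ω w ψ = l2NormSq n Ω (formWeight w f) ψ :=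
  tForm_add_l2NormSq hΩ.measurableSet hw0 (fun _ _ => le_max_right _ _)
    (hw.aemeasurable hΩ.measurableSet) (hf.max measurable_const).aemeasurable
    (hψ.continuousOn.aemeasurable hΩ.measurableSet)

theorem memQplus_iff (hΩ : IsOpen Ω) (hw : ContinuousOn w Ω) (hw0 : ∀ x ∈ Ω, 0 ≤ w x)
    (hf : Measurable f) {ψ : EuclideanSpace ℂ (Fin n) → ℂ} :
    MemQplus n Ω w f ψ ↔ DifferentiableOn ℂ ψ Ω ∧ l2NormSq n Ω (formWeight w f) ψ < ⊤ := by
  refine ⟨fun ⟨hd, hL, hT⟩ => ⟨hd, ?_⟩, fun ⟨hd, hV⟩ => ?_⟩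
  · rw [← tForm_add_l2NormSq_eq_formWeight hΩ hw hw0 hf hd]
    exact ENNReal.add_lt_top.2 ⟨hT, hL⟩
  · rw [← tForm_add_l2NormSq_eq_formWeight hΩ hw hw0 hf hd, ENNReal.add_lt_top] at hV
    exact ⟨hd, hV.2, hV.1⟩

theorem MemQplus.sub (hΩ : IsOpen Ω) (hw : ContinuousOn w Ω) (hw0 : ∀ x ∈ Ω, 0 ≤ w x)
    (hf : Measurable f) {a b : EuclideanSpace ℂ (Fin n) → ℂ} (ha : MemQplus n Ω w f a)
    (hb : MemQplus n Ω w f b) : MemQplus n Ω w f (fun x => a x - b x) := by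
  rw [memQplus_iff hΩ hw hw0 hf] at ha hb ⊢
  refine ⟨ha.1.sub hb.1, (l2NormSq_sub_le hΩ.measurableSet
    (fun x hx => (hw0 x hx).trans (self_le_formWeight (hw0 x hx)))
    (aemeasurable_formWeight hΩ.measurableSet hw hf)
    (ha.1.continuousOn.aemeasurable hΩ.measurableSet)).trans_lt ?_⟩
  exact ENNReal.add_lt_top.2 ⟨ENNReal.mul_lt_top (by simp) ha.2, ENNReal.mul_lt_top (by simp) hb.2⟩

theorem toReal_l2NormSq_formWeight (hΩ : IsOpen Ω) (hw : ContinuousOn w Ω)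
    (hw0 : ∀ x ∈ Ω, 0 ≤ w x) (hf : Measurable f) {ψ : EuclideanSpace ℂ (Fin n) → ℂ}
    (hψ : MemQplus n Ω w f ψ) :
    (l2NormSq n Ω (formWeight w f) ψ).toReal =
      (tForm n Ω w (fun x => max (f x) 0) ψ).toReal + (l2NormSq n Ω w ψ).toReal := by
  rw [← tForm_add_l2NormSq_eq_formWeight hΩ hw hw0 hf hψ.1,
    ENNReal.toReal_add hψ.2.2.ne hψ.2.1.ne]

variable {c₁ c₂ : ℝ}

theorem toReal_tForm_neg_le (hc₁ : 0 ≤ c₁) (hc₂ : 0 ≤ c₂) {ψ : EuclideanSpace ℂ (Fin n) → ℂ}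
    (hψ : MemQplus n Ω w f ψ)
    (hbound : tForm n Ω w (fun x => max (-f x) 0) ψ ≤
      ENNReal.ofReal c₁ * tForm n Ω w (fun x => max (f x) 0) ψ +
        ENNReal.ofReal c₂ * l2NormSq n Ω w ψ) :
    (tForm n Ω w (fun x => max (-f x) 0) ψ).toReal ≤
      c₁ * (tForm n Ω w (fun x => max (f x) 0) ψ).toReal + c₂ * (l2NormSq n Ω w ψ).toReal := by
  have := hψ.2.1.ne
  have := hψ.2.2.ne
  refine (ENNReal.toReal_mono (by finiteness) hbound).trans_eq ?_
  rw [ENNReal.toReal_add (by finiteness) (by finiteness), ENNReal.toReal_mul, ENNReal.toReal_mul,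
    ENNReal.toReal_ofReal hc₁, ENNReal.toReal_ofReal hc₂]

theorem tfNorm_nonneg (ψ : EuclideanSpace ℂ (Fin n) → ℂ) : 0 ≤ tfNorm n Ω w f c₂ ψ :=
  Real.sqrt_nonneg _

theorem mul_toReal_l2NormSq_formWeight_le_tfNorm_sq (hΩ : IsOpen Ω) (hw : ContinuousOn w Ω)
    (hw0 : ∀ x ∈ Ω, 0 ≤ w x) (hf : Measurable f) (hc₁0 : 0 ≤ c₁) (hc₁1 : c₁ ≤ 1)
    {ψ : EuclideanSpace ℂ (Fin n) → ℂ} (hψ : MemQplus n Ω w f ψ)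
    (hneg : (tForm n Ω w (fun x => max (-f x) 0) ψ).toReal ≤
      c₁ * (tForm n Ω w (fun x => max (f x) 0) ψ).toReal + c₂ * (l2NormSq n Ω w ψ).toReal) :
    (1 - c₁) * (l2NormSq n Ω (formWeight w f) ψ).toReal ≤ tfNorm n Ω w f c₂ ψ ^ 2 := by
  have hA := (tForm n Ω w (fun x => max (f x) 0) ψ).toReal_nonneg
  have hL := (l2NormSq n Ω w ψ).toReal_nonneg
  rw [toReal_l2NormSq_formWeight hΩ hw hw0 hf hψ, tfNorm, Real.sq_sqrt (by nlinarith)]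
  nlinarith

theorem tfNorm_le_sqrt_l2NormSq_formWeight (hΩ : IsOpen Ω) (hw : ContinuousOn w Ω)
    (hw0 : ∀ x ∈ Ω, 0 ≤ w x) (hf : Measurable f) (hc₂ : 0 ≤ c₂)
    {ψ : EuclideanSpace ℂ (Fin n) → ℂ} (hψ : MemQplus n Ω w f ψ) :
    tfNorm n Ω w f c₂ ψ ≤ √((c₂ + 1) * (l2NormSq n Ω (formWeight w f) ψ).toReal) := by
  have hA := (tForm n Ω w (fun x => max (f x) 0) ψ).toReal_nonneg
  have hB := (tForm n Ω w (fun x => max (-f x) 0) ψ).toReal_nonneg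
  rw [toReal_l2NormSq_formWeight hΩ hw hw0 hf hψ]
  exact Real.sqrt_le_sqrt (by nlinarith)

theorem exists_tendsto_tfNorm_sub_of_cauchy (hΩ : IsOpen Ω) (hw : ContinuousOn w Ω)
    (hwpos : ∀ x ∈ Ω, 0 < w x) (hf : Measurable f) (hc₁0 : 0 ≤ c₁) (hc₁1 : c₁ < 1)
    (hc₂ : 0 ≤ c₂)
    (hneg : ∀ ψ, MemQplus n Ω w f ψ → (tForm n Ω w (fun x => max (-f x) 0) ψ).toReal ≤
      c₁ * (tForm n Ω w (fun x => max (f x) 0) ψ).toReal + c₂ * (l2NormSq n Ω w ψ).toReal)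
    {ψ : ℕ → EuclideanSpace ℂ (Fin n) → ℂ} (hψ : ∀ l, MemQplus n Ω w f (ψ l))
    (hcauchy : ∀ ε : ℝ, 0 < ε → ∃ N : ℕ, ∀ k ≥ N, ∀ l ≥ N,
      tfNorm n Ω w f c₂ (fun x => ψ k x - ψ l x) < ε) :
    ∃ φ, MemQplus n Ω w f φ ∧
      Tendsto (fun l => tfNorm n Ω w f c₂ (fun x => ψ l x - φ x)) atTop (nhds 0) := by
  have hw0 : ∀ x ∈ Ω, 0 ≤ w x := fun x hx => (hwpos x hx).le
  have hQ := fun χ => memQplus_iff (n := n) hΩ hw hw0 hf (ψ := χ)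
  have hdiff : ∀ k l, MemQplus n Ω w f (fun x => ψ k x - ψ l x) := fun k l =>
    (hψ k).sub hΩ hw hw0 hf (hψ l)
  have htf : Tendsto (fun p : ℕ × ℕ => tfNorm n Ω w f c₂ (fun x => ψ p.1 x - ψ p.2 x))
      (atTop ×ˢ atTop) (nhds 0) := by
    refine Metric.tendsto_nhds.2 fun ε hε => ?_
    obtain ⟨N, hN⟩ := hcauchy ε hε
    rw [prod_atTop_atTop_eq, eventually_atTop_prod_self']
    refine ⟨N, fun k hk l hl => ?_⟩
    rw [dist_zero_right, Real.norm_of_nonneg (tfNorm_nonneg _)]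
    exact hN k hk l hl
  have hVcauchy : Tendsto (fun p : ℕ × ℕ => l2NormSq n Ω (formWeight w f)
      (fun x => ψ p.1 x - ψ p.2 x)) (atTop ×ˢ atTop) (nhds 0) := by
    have hfin : ∀ p : ℕ × ℕ, l2NormSq n Ω (formWeight w f) (fun x => ψ p.1 x - ψ p.2 x) ≠ ⊤ :=
      fun p => ((hQ _).1 (hdiff p.1 p.2)).2.ne
    refine (ENNReal.tendsto_toReal_iff hfin ENNReal.zero_ne_top).1 ?_
    rw [ENNReal.toReal_zero]
    have hsq := (htf.pow 2).div_const (1 - c₁)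
    rw [zero_pow two_ne_zero, zero_div] at hsq
    refine squeeze_zero (fun _ => ENNReal.toReal_nonneg) (fun p => ?_) hsq
    rw [le_div_iff₀ (sub_pos.2 hc₁1), mul_comm]
    exact mul_toReal_l2NormSq_formWeight_le_tfNorm_sq hΩ hw hw0 hf hc₁0 hc₁1.le (hdiff _ _)
      (hneg _ (hdiff _ _))
  obtain ⟨φ, hφd, hφV, hlim⟩ := exists_tendsto_l2NormSq_sub_of_cauchy hΩ hw hwpos
    (aemeasurable_formWeight hΩ.measurableSet hw hf) (fun x hx => self_le_formWeight (hw0 x hx))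
    (fun l => (hψ l).1) (fun l => ((hQ _).1 (hψ l)).2) hVcauchy
  have hφ : MemQplus n Ω w f φ := (hQ φ).2 ⟨hφd, hφV⟩
  have hbound := fun l =>
    tfNorm_le_sqrt_l2NormSq_formWeight hΩ hw hw0 hf hc₂ ((hψ l).sub hΩ hw hw0 hf hφ)
  have hsqrt := (((ENNReal.tendsto_toReal ENNReal.zero_ne_top).comp hlim).const_mul (c₂ + 1)).sqrt
  rw [ENNReal.toReal_zero, mul_zero, Real.sqrt_zero] at hsqrt
  exact ⟨φ, hφ, squeeze_zero (fun _ => tfNorm_nonneg _) hbound hsqrt⟩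

end FormDomain

theorem form_tf_semibounded_closed_general (n : ℕ) (Ω : Set (EuclideanSpace ℂ (Fin n)))
    (hΩ : IsOpen Ω)
    (w : EuclideanSpace ℂ (Fin n) → ℝ) (hw : ContinuousOn w Ω)
    (hwpos : ∀ x ∈ Ω, 0 < w x)
    (f : EuclideanSpace ℂ (Fin n) → ℝ) (hf : Measurable f)
    (c₁ c₂ : ℝ) (hc₁0 : 0 ≤ c₁) (hc₁1 : c₁ < 1) (hc₂ : 0 ≤ c₂)
    (hbound : ∀ ψ, MemQplus n Ω w f ψ →
      tForm n Ω w (fun x => max (-f x) 0) ψ ≤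
        ENNReal.ofReal c₁ * tForm n Ω w (fun x => max (f x) 0) ψ +
          ENNReal.ofReal c₂ * l2NormSq n Ω w ψ) :
    -- `t_f` is well defined on `Q(t_{f⁺})` …
    (∀ ψ, MemQplus n Ω w f ψ → tForm n Ω w (fun x => max (-f x) 0) ψ < ⊤) ∧
    -- … bounded below there by `−c₂‖ψ‖²` …
    (∀ ψ, MemQplus n Ω w f ψ →
      -(c₂ * (l2NormSq n Ω w ψ).toReal) ≤
        (tForm n Ω w (fun x => max (f x) 0) ψ).toReal -
          (tForm n Ω w (fun x => max (-f x) 0) ψ).toReal) ∧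
    -- … and closed: `Q(t_{f⁺})` is complete with respect to the norm `tfNorm`.
    (∀ ψ : ℕ → EuclideanSpace ℂ (Fin n) → ℂ, (∀ l, MemQplus n Ω w f (ψ l)) →
      (∀ ε : ℝ, 0 < ε → ∃ N : ℕ, ∀ k ≥ N, ∀ l ≥ N,
        tfNorm n Ω w f c₂ (fun x => ψ k x - ψ l x) < ε) →
      ∃ φ, MemQplus n Ω w f φ ∧
        Tendsto (fun l => tfNorm n Ω w f c₂ (fun x => ψ l x - φ x)) atTop (nhds 0)) := by
  have hneg := fun ψ hψ => toReal_tForm_neg_le hc₁0 hc₂ hψ (hbound ψ hψ)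
  refine ⟨fun ψ hψ => (hbound ψ hψ).trans_lt ?_, fun ψ hψ => ?_,
    fun ψ hψ hcauchy => exists_tendsto_tfNorm_sub_of_cauchy hΩ hw hwpos hf hc₁0 hc₁1 hc₂ hneg hψ
      hcauchy⟩
  · have := hψ.2.1.ne
    have := hψ.2.2.ne
    exact lt_top_iff_ne_top.2 (by finiteness)
  · have := mul_le_of_le_one_left ENNReal.toReal_nonneg hc₁1.le
      (b := (tForm n Ω w (fun x => max (f x) 0) ψ).toReal)
    linarith [hneg ψ hψ]

/-- KLMN-type lemma for Berezin-Toeplitz forms: if `t_{f⁻}` is a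
form-bounded perturbation of `t_{f⁺}` with relative bound `c₁ < 1`, then
`t_f = t_{f⁺} − t_{f⁻}` is well defined on `Q(t_{f⁺})`, bounded below by `−c₂‖ψ‖²`,
and closed: `Q(t_{f⁺})` is complete in the norm `(t_f(ψ) + (c₂+1)‖ψ‖²)^{1/2}`. -/
theorem form_tf_semibounded_closed (n : ℕ) (Ω : Set (EuclideanSpace ℂ (Fin n)))
    (hΩ : IsOpen Ω) (hne : Ω.Nonempty)
    (w : EuclideanSpace ℂ (Fin n) → ℝ) (hw : ContinuousOn w Ω)
    (hwpos : ∀ x ∈ Ω, 0 < w x)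
    (f : EuclideanSpace ℂ (Fin n) → ℝ) (hf : Measurable f)
    (c₁ c₂ : ℝ) (hc₁0 : 0 ≤ c₁) (hc₁1 : c₁ < 1) (hc₂ : 0 ≤ c₂)
    (hbound : ∀ ψ, MemQplus n Ω w f ψ →
      tForm n Ω w (fun x => max (-f x) 0) ψ ≤
        ENNReal.ofReal c₁ * tForm n Ω w (fun x => max (f x) 0) ψ +
          ENNReal.ofReal c₂ * l2NormSq n Ω w ψ) :
    -- `t_f` is well defined on `Q(t_{f⁺})` …
    (∀ ψ, MemQplus n Ω w f ψ → tForm n Ω w (fun x => max (-f x) 0) ψ < ⊤) ∧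
    -- … bounded below there by `−c₂‖ψ‖²` …
    (∀ ψ, MemQplus n Ω w f ψ →
      -(c₂ * (l2NormSq n Ω w ψ).toReal) ≤
        (tForm n Ω w (fun x => max (f x) 0) ψ).toReal -
          (tForm n Ω w (fun x => max (-f x) 0) ψ).toReal) ∧
    -- … and closed: `Q(t_{f⁺})` is complete with respect to the norm `tfNorm`.
    (∀ ψ : ℕ → EuclideanSpace ℂ (Fin n) → ℂ, (∀ l, MemQplus n Ω w f (ψ l)) →
      (∀ ε : ℝ, 0 < ε → ∃ N : ℕ, ∀ k ≥ N, ∀ l ≥ N,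
        tfNorm n Ω w f c₂ (fun x => ψ k x - ψ l x) < ε) →
      ∃ φ, MemQplus n Ω w f φ ∧
        Tendsto (fun l => tfNorm n Ω w f c₂ (fun x => ψ l x - φ x)) atTop (nhds 0)) :=
  form_tf_semibounded_closed_general n Ω hΩ w hw hwpos f hf c₁ c₂ hc₁0 hc₁1 hc₂ hbound

end
end

section
/- Let d ≥ 1 and let m, l be non-negative integers with l < m − d/2. Then there is a constant C = C(d, m, l) ≥ 0 such that for every multi-index j = (j_1,…,j_d) with |j| = j_1 + … + j_d ≤ l, every x ∈ ℝ^d, and every measurable g : ℝ^d → ℂ with ∫_{ℝ^d} |g(k)|² (1 + ‖k‖²)^m dk < ∞, the function k ↦ k^j e^{i⟨k,x⟩} g(k) (where k^j = k_1^{j_1}⋯k_d^{j_d}) is Lebesgue-integrable and | ∫_{ℝ^d} k^j e^{i⟨k,x⟩} g(k) dk / (2π)^d | ≤ C · ( ∫_{ℝ^d} |g(k)|² (1 + ‖k‖²)^m dk )^{1/2}. In particular, taking g to be the Fourier transform of f ∈ W^{m,2}(ℝ^d), the functionals δ^{(j)}_x are uniformly bounded on the Sobolev space W^{m,2}(ℝ^d)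 for |j| ≤ l. -/
/-!
Write the integrand as `k^j (1 + ‖k‖²)^{-m/2} · e^{i⟨k,x⟩} (1 + ‖k‖²)^{m/2} g(k)`. Since
`|k^j|² ≤ (1 + ‖k‖²)^l`, Cauchy–Schwarz bounds its `L¹` norm by the square root of
`∫ (1 + ‖k‖²)^{l-m} dk`, which is finite because `2(m - l) > d`, times the weighted `L²` norm of
`g`. Dividing by `(2π)^d ≥ 1` only helps.
-/

open MeasureTheory ENNReal RealInnerProductSpace

noncomputable section

section CauchySchwarz

variable {α E : Type*} [MeasurableSpace α] {μ : Measure α} [NormedAddCommGroup E]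
  {F : α → E} {u v : α → ℝ}

theorem lintegral_ofReal_norm_le_of_norm_sq_le_mul (hu : AEMeasurable u μ)
    (hv : AEMeasurable v μ) (hu0 : ∀ x, 0 ≤ u x) (hv0 : ∀ x, 0 ≤ v x)
    (hF : ∀ x, ‖F x‖ ^ 2 ≤ u x * v x) :
    ∫⁻ x, ENNReal.ofReal ‖F x‖ ∂μ ≤
      (∫⁻ x, ENNReal.ofReal (u x) ∂μ) ^ (1 / 2 : ℝ) *
        (∫⁻ x, ENNReal.ofReal (v x) ∂μ) ^ (1 / 2 : ℝ) := by
  have hsq : ∀ {w : α → ℝ}, (∀ x, 0 ≤ w x) →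
      ∀ x, ENNReal.ofReal √(w x) ^ (2 : ℝ) = ENNReal.ofReal (w x) := fun hw0 x => by
    rw [ENNReal.ofReal_rpow_of_nonneg (Real.sqrt_nonneg _) zero_le_two, Real.rpow_two,
      Real.sq_sqrt (hw0 x)]
  calc ∫⁻ x, ENNReal.ofReal ‖F x‖ ∂μ
      ≤ ∫⁻ x, ((fun x => ENNReal.ofReal √(u x)) * fun x => ENNReal.ofReal √(v x)) x ∂μ :=
        lintegral_mono fun x => by
          rw [Pi.mul_apply, ← ENNReal.ofReal_mul (Real.sqrt_nonneg _), ← Real.sqrt_mul (hu0 x)]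
          exact ENNReal.ofReal_le_ofReal (Real.le_sqrt_of_sq_le (hF x))
    _ ≤ _ := ENNReal.lintegral_mul_le_Lp_mul_Lq μ Real.HolderConjugate.two_two
        hu.sqrt.ennreal_ofReal hv.sqrt.ennreal_ofReal
    _ = _ := by simp_rw [hsq hu0, hsq hv0]

variable [NormedSpace ℝ E]

theorem integrable_and_norm_integral_le_of_norm_sq_le_mul (hF_meas : AEStronglyMeasurable F μ)
    (hu : AEMeasurable u μ) (hv : AEMeasurable v μ) (hu0 : ∀ x, 0 ≤ u x) (hv0 : ∀ x, 0 ≤ v x)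
    (hF : ∀ x, ‖F x‖ ^ 2 ≤ u x * v x) (hu_fin : ∫⁻ x, ENNReal.ofReal (u x) ∂μ < ∞)
    (hv_fin : ∫⁻ x, ENNReal.ofReal (v x) ∂μ < ∞) :
    Integrable F μ ∧ ‖∫ x, F x ∂μ‖ ≤
      √(∫⁻ x, ENNReal.ofReal (u x) ∂μ).toReal * √(∫⁻ x, ENNReal.ofReal (v x) ∂μ).toReal := by
  have hle := lintegral_ofReal_norm_le_of_norm_sq_le_mul hu hv hu0 hv0 hF
  have hlt : (∫⁻ x, ENNReal.ofReal (u x) ∂μ) ^ (1 / 2 : ℝ) *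
      (∫⁻ x, ENNReal.ofReal (v x) ∂μ) ^ (1 / 2 : ℝ) < ∞ :=
    ENNReal.mul_lt_top (ENNReal.rpow_lt_top_of_nonneg (by norm_num) hu_fin.ne)
      (ENNReal.rpow_lt_top_of_nonneg (by norm_num) hv_fin.ne)
  refine ⟨⟨hF_meas, ?_⟩, ?_⟩
  · simpa only [HasFiniteIntegral, ofReal_norm] using hle.trans_lt hlt
  · refine (norm_integral_le_lintegral_norm F).trans ((ENNReal.toReal_mono hlt.ne hle).trans_eq ?_)
    rw [ENNReal.toReal_mul, ← ENNReal.toReal_rpow, ← ENNReal.toReal_rpow, Real.sqrt_eq_rpow,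
      Real.sqrt_eq_rpow]

end CauchySchwarz

theorem lintegral_one_add_norm_sq_rpow_lt_top {E : Type*} [NormedAddCommGroup E]
    [NormedSpace ℝ E] [FiniteDimensional ℝ E] [MeasurableSpace E] [BorelSpace E]
    (μ : Measure E) [μ.IsAddHaarMeasure] {s : ℝ} (hs : s < -(Module.finrank ℝ E : ℝ) / 2) :
    ∫⁻ x, ENNReal.ofReal ((1 + ‖x‖ ^ 2) ^ s) ∂μ < ∞ := by
  have h := integrable_rpow_neg_one_add_norm_sq (μ := μ) (r := -2 * s) (by linarith)
  rw [show -(-2 * s) / 2 = s by ring] at h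
  exact h.lintegral_lt_top

theorem EuclideanSpace.sq_prod_pow_le_one_add_norm_sq_pow {ι : Type*} [Fintype ι]
    (k : EuclideanSpace ℝ ι) (j : ι → ℕ) {l : ℕ} (hj : ∑ i, j i ≤ l) :
    (∏ i, k i ^ j i) ^ 2 ≤ (1 + ‖k‖ ^ 2) ^ l :=
  calc (∏ i, k i ^ j i) ^ 2 = ∏ i, (k i ^ 2) ^ j i := by
        rw [← Finset.prod_pow]; congr! 1 with i; ring
    _ ≤ ∏ i, (‖k‖ ^ 2) ^ j i := by
        gcongr ∏ i, ?_ ^ j i with i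
        exact sq_le_sq.2 ((abs_norm k).symm ▸ PiLp.norm_apply_le k i)
    _ = (‖k‖ ^ 2) ^ ∑ i, j i := Finset.prod_pow_eq_pow_sum _ _ _
    _ ≤ (1 + ‖k‖ ^ 2) ^ ∑ i, j i := by gcongr; linarith
    _ ≤ (1 + ‖k‖ ^ 2) ^ l := pow_le_pow_right₀ (by nlinarith [norm_nonneg k]) hj

theorem norm_sq_monomial_mul_exp_mul_le {ι : Type*} [Fintype ι] (k x : EuclideanSpace ℝ ι)
    (j : ι → ℕ) {l : ℕ} (hj : ∑ i, j i ≤ l) (m : ℕ) (z : ℂ) :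
    ‖((∏ i, k i ^ j i : ℝ) : ℂ) * Complex.exp (Complex.I * ((⟪k, x⟫ : ℝ) : ℂ)) * z‖ ^ 2 ≤
      (1 + ‖k‖ ^ 2) ^ ((l : ℝ) - m) * (‖z‖ ^ 2 * (1 + ‖k‖ ^ 2) ^ m) := by
  have hpos : (0 : ℝ) < 1 + ‖k‖ ^ 2 := by positivity
  calc ‖((∏ i, k i ^ j i : ℝ) : ℂ) * Complex.exp (Complex.I * ((⟪k, x⟫ : ℝ) : ℂ)) * z‖ ^ 2
      = (∏ i, k i ^ j i) ^ 2 * ‖z‖ ^ 2 := by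
        rw [norm_mul, norm_mul, Complex.norm_exp_I_mul_ofReal, Complex.norm_real,
          Real.norm_eq_abs, mul_one, mul_pow, sq_abs]
    _ ≤ (1 + ‖k‖ ^ 2) ^ l * ‖z‖ ^ 2 := by
        gcongr; exact EuclideanSpace.sq_prod_pow_le_one_add_norm_sq_pow k j hj
    _ = (1 + ‖k‖ ^ 2) ^ ((l : ℝ) - m) * (‖z‖ ^ 2 * (1 + ‖k‖ ^ 2) ^ m) := by
        rw [mul_left_comm, ← Real.rpow_add_natCast hpos.ne', sub_add_cancel,
          Real.rpow_natCast, mul_comm]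

theorem sobolev_point_evaluation_bound_general (d m l : ℕ)
    (hml : (l : ℝ) < (m : ℝ) - (d : ℝ) / 2) :
    ∃ C : ℝ, 0 ≤ C ∧
      ∀ j : Fin d → ℕ, (∑ i, j i) ≤ l →
      ∀ x : EuclideanSpace ℝ (Fin d),
      ∀ g : EuclideanSpace ℝ (Fin d) → ℂ, Measurable g →
        (∫⁻ k, ENNReal.ofReal (‖g k‖ ^ 2 * (1 + ‖k‖ ^ 2) ^ m)) < ⊤ →
        Integrable (fun k : EuclideanSpace ℝ (Fin d) =>
          ((∏ i, (k i) ^ (j i) : ℝ) : ℂ) *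
            Complex.exp (Complex.I * ((⟪k, x⟫ : ℝ) : ℂ)) * g k) ∧
        ‖(∫ k : EuclideanSpace ℝ (Fin d),
            ((∏ i, (k i) ^ (j i) : ℝ) : ℂ) *
              Complex.exp (Complex.I * ((⟪k, x⟫ : ℝ) : ℂ)) * g k) /
            ((2 * Real.pi) ^ d : ℝ)‖ ≤
          C * Real.sqrt (∫⁻ k, ENNReal.ofReal (‖g k‖ ^ 2 * (1 + ‖k‖ ^ 2) ^ m)).toReal := by
  set A := ∫⁻ k : EuclideanSpace ℝ (Fin d), ENNReal.ofReal ((1 + ‖k‖ ^ 2) ^ ((l : ℝ) - m))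
  have hA : A < ∞ := lintegral_one_add_norm_sq_rpow_lt_top volume (by
    rw [finrank_euclideanSpace_fin]; linarith)
  refine ⟨√A.toReal, Real.sqrt_nonneg _, fun j hj x g hg hB => ?_⟩
  obtain ⟨hint, hnorm⟩ := integrable_and_norm_integral_le_of_norm_sq_le_mul (by fun_prop)
    (by fun_prop) (by fun_prop) (fun k => by positivity) (fun k => by positivity)
    (fun k => norm_sq_monomial_mul_exp_mul_le k x j hj m (g k)) hA hB
  have h2pi : (1 : ℝ) ≤ (2 * Real.pi) ^ d := one_le_pow₀ (by linarith [Real.pi_gt_three])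
  refine ⟨hint, le_trans ?_ hnorm⟩
  rw [norm_div, Complex.norm_real, Real.norm_of_nonneg (by positivity)]
  exact div_le_self (norm_nonneg _) h2pi

/-- uniform boundedness of the derivative point-evaluation functionals
`δ^{(j)}_x(f) = ∫ k^j e^{i⟨k,x⟩} f̂(k) dk/(2π)^d` on the Sobolev space `W^{m,2}(ℝ^d)`
(expressed on the Fourier side), for multi-indices `j` of degree `|j| ≤ l < m − d/2`. -/
theorem sobolev_point_evaluation_bound (d m l : ℕ) (hd : 1 ≤ d)
    (hml : (l : ℝ) < (m : ℝ) - (d : ℝ) / 2) :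
    ∃ C : ℝ, 0 ≤ C ∧
      ∀ j : Fin d → ℕ, (∑ i, j i) ≤ l →
      ∀ x : EuclideanSpace ℝ (Fin d),
      ∀ g : EuclideanSpace ℝ (Fin d) → ℂ, Measurable g →
        (∫⁻ k, ENNReal.ofReal (‖g k‖ ^ 2 * (1 + ‖k‖ ^ 2) ^ m)) < ⊤ →
        Integrable (fun k : EuclideanSpace ℝ (Fin d) =>
          ((∏ i, (k i) ^ (j i) : ℝ) : ℂ) *
            Complex.exp (Complex.I * ((⟪k, x⟫ : ℝ) : ℂ)) * g k) ∧
        ‖(∫ k : EuclideanSpace ℝ (Fin d),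
            ((∏ i, (k i) ^ (j i) : ℝ) : ℂ) *
              Complex.exp (Complex.I * ((⟪k, x⟫ : ℝ) : ℂ)) * g k) /
            ((2 * Real.pi) ^ d : ℝ)‖ ≤
          C * Real.sqrt (∫⁻ k, ENNReal.ofReal (‖g k‖ ^ 2 * (1 + ‖k‖ ^ 2) ^ m)).toReal :=
  sobolev_point_evaluation_bound_general d m l hml

end
end

section
/- Let d ≥ 1 and let m, l be non-negative integers with l < m − d/2. Let g : ℝ^d → ℂ be measurable with ∫_{ℝ^d} |g(k)|² (1 + ‖k‖²)^m dk < ∞. Then g is Lebesgue-integrable on ℝ^d, and the function f : ℝ^d → ℂ defined by f(x) := (2π)^{−d} ∫_{ℝ^d} e^{i⟨k,x⟩} g(k) dk is l-times continuously differentiable on ℝ^d (of class C^l). In particular, every element of the Sobolev space W^{m,2}(ℝ^d) with l < m − d/2 has an l-times continuously differentiable representative x ↦ (2π)^{−d} ∫ e^{i⟨k,x⟩} f̂(k) dk. -/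
/-! The weight `(1 + ‖k‖²)^m` splits `‖k‖ⁿ |g k|` by AM–GM into `|g k|² (1 + ‖k‖²)^m`, integrable by
assumption, and `(1 + ‖k‖²)^(n - m)`, integrable on `ℝ^d` exactly when `n < m - d/2`. So `g` has
integrable moments up to order `l`, hence its Fourier transform is `C^l`, and the integral in the
statement is the inverse Fourier transform of `g` evaluated at `(2π)⁻¹ • x`. -/

open MeasureTheory RealInnerProductSpace FourierTransform Real Module

section SobolevWeight

variable {E : Type*} [NormedAddCommGroup E]

theorem norm_pow_mul_le_sobolevWeight (x : E) (b : ℝ) (n m : ℕ) :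
    ‖x‖ ^ n * b ≤ (b ^ 2 * (1 + ‖x‖ ^ 2) ^ m + (1 + ‖x‖ ^ 2) ^ ((n : ℝ) - m)) / 2 := by
  set t := 1 + ‖x‖ ^ 2
  have ht : 0 < t := by positivity
  have hpow : (‖x‖ ^ n) ^ 2 ≤ t ^ n := by
    rw [← pow_mul, mul_comm, pow_mul]
    gcongr
    linarith
  have hdecay : (t ^ m)⁻¹ * t ^ n = t ^ ((n : ℝ) - m) := by
    rw [Real.rpow_sub ht, Real.rpow_natCast, Real.rpow_natCast, div_eq_inv_mul]
  calc ‖x‖ ^ n * b = 2 * b * ‖x‖ ^ n / 2 := by ring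
    _ ≤ (t ^ m * b ^ 2 + (t ^ m)⁻¹ * (‖x‖ ^ n) ^ 2) / 2 := by
      gcongr
      exact two_mul_le_add_mul_sq (by positivity)
    _ ≤ (t ^ m * b ^ 2 + (t ^ m)⁻¹ * t ^ n) / 2 := by gcongr
    _ = (b ^ 2 * t ^ m + t ^ ((n : ℝ) - m)) / 2 := by rw [hdecay, mul_comm (t ^ m)]

variable [NormedSpace ℝ E] [FiniteDimensional ℝ E] [MeasurableSpace E] [BorelSpace E]
  {μ : Measure E} [μ.IsAddHaarMeasure] {F : Type*} [NormedAddCommGroup F]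

theorem integrable_norm_pow_mul_norm_of_integrable_sobolevWeight {g : E → F} {n m : ℕ}
    (hg : AEStronglyMeasurable g μ)
    (hweight : Integrable (fun k ↦ ‖g k‖ ^ 2 * (1 + ‖k‖ ^ 2) ^ m) μ)
    (hn : (n : ℝ) < m - finrank ℝ E / 2) :
    Integrable (fun k ↦ ‖k‖ ^ n * ‖g k‖) μ := by
  have hdecay : Integrable (fun k : E ↦ (1 + ‖k‖ ^ 2) ^ ((n : ℝ) - m)) μ := by
    convert integrable_rpow_neg_one_add_norm_sq (μ := μ) (r := 2 * (m - n)) (by linarith)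
      using 3
    ring
  refine ((hweight.add hdecay).div_const 2).mono'
    ((continuous_norm.pow n).aestronglyMeasurable.mul hg.norm) (ae_of_all _ fun k ↦ ?_)
  rw [norm_of_nonneg (by positivity)]
  exact norm_pow_mul_le_sobolevWeight k ‖g k‖ n m

end SobolevWeight

section InverseFourier

variable {V E : Type*} [NormedAddCommGroup V] [InnerProductSpace ℝ V] [FiniteDimensional ℝ V]
  [MeasurableSpace V] [BorelSpace V] [NormedAddCommGroup E] [NormedSpace ℂ E]

theorem Real.contDiff_fourierInv {N : ℕ∞} {f : V → E}
    (hf : ∀ n : ℕ, n ≤ N → Integrable (fun v ↦ ‖v‖ ^ n * ‖f v‖)) :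
    ContDiff ℝ N (𝓕⁻ f) := by
  have h : 𝓕⁻ f = 𝓕 f ∘ Neg.neg := funext (fourierInv_eq_fourier_neg f)
  rw [h]
  exact (contDiff_fourier hf).comp contDiff_neg

theorem integral_exp_inner_smul_eq_fourierInv (f : V → E) (x : V) :
    ∫ k, Complex.exp (Complex.I * ((⟪k, x⟫ : ℝ) : ℂ)) • f k = 𝓕⁻ f ((2 * π)⁻¹ • x) := by
  rw [fourierInv_eq']
  congr with k
  rw [real_inner_smul_right, mul_inv_cancel_left₀ (by positivity), mul_comm]

end InverseFourier

theorem sobolev_continuous_representative_general (d m l : ℕ)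
    (hml : (l : ℝ) < (m : ℝ) - (d : ℝ) / 2)
    (g : EuclideanSpace ℝ (Fin d) → ℂ) (hg : Measurable g)
    (hfin : (∫⁻ k, ENNReal.ofReal (‖g k‖ ^ 2 * (1 + ‖k‖ ^ 2) ^ m)) < ⊤) :
    Integrable g ∧
    ContDiff ℝ (l : ℕ∞) (fun x : EuclideanSpace ℝ (Fin d) =>
      (((2 * Real.pi) ^ d : ℝ))⁻¹ •
        ∫ k : EuclideanSpace ℝ (Fin d),
          Complex.exp (Complex.I * ((⟪k, x⟫ : ℝ) : ℂ)) * g k) := by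
  have hweight : Integrable (fun k ↦ ‖g k‖ ^ 2 * (1 + ‖k‖ ^ 2) ^ m) :=
    ⟨by fun_prop, (hasFiniteIntegral_iff_ofReal (ae_of_all _ fun k ↦ by positivity)).2 hfin⟩
  have hmoment (n : ℕ) (hn : n ≤ l) : Integrable (fun k ↦ ‖k‖ ^ n * ‖g k‖) := by
    refine integrable_norm_pow_mul_norm_of_integrable_sobolevWeight hg.aestronglyMeasurable
      hweight ?_
    rw [finrank_euclideanSpace_fin]
    exact lt_of_le_of_lt (by exact_mod_cast hn) hml
  refine ⟨(integrable_norm_iff hg.aestronglyMeasurable).1 (by simpa using hmoment 0 l.zero_le), ?_⟩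
  simp_rw [← smul_eq_mul (a := Complex.exp _), integral_exp_inner_smul_eq_fourierInv]
  exact ((Real.contDiff_fourierInv fun n hn ↦ hmoment n (by exact_mod_cast hn)).comp
    (contDiff_const_smul _)).const_smul _

/-- Sobolev embedding, Fourier side: if
`∫ |g(k)|²(1+‖k‖²)^m dk < ∞` and `l < m − d/2`, then `g` is integrable and
`x ↦ (2π)^{−d} ∫ e^{i⟨k,x⟩} g(k) dk` is `l`-times continuously differentiable;
in particular every element of `W^{m,2}(ℝ^d)` has a `C^l` representative. -/
theorem sobolev_continuous_representative (d m l : ℕ) (hd : 1 ≤ d)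
    (hml : (l : ℝ) < (m : ℝ) - (d : ℝ) / 2)
    (g : EuclideanSpace ℝ (Fin d) → ℂ) (hg : Measurable g)
    (hfin : (∫⁻ k, ENNReal.ofReal (‖g k‖ ^ 2 * (1 + ‖k‖ ^ 2) ^ m)) < ⊤) :
    Integrable g ∧
    ContDiff ℝ (l : ℕ∞) (fun x : EuclideanSpace ℝ (Fin d) =>
      (((2 * Real.pi) ^ d : ℝ))⁻¹ •
        ∫ k : EuclideanSpace ℝ (Fin d),
          Complex.exp (Complex.I * ((⟪k, x⟫ : ℝ) : ℂ)) * g k) :=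
  sobolev_continuous_representative_general d m l hml g hg hfin
end
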